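/- Let M be binary and Y take values in {0,1,2}, with joint law factoring as P(M)P(Y|M)P(R^M|M)P(R^Y|Y). There exist two distinct parameter vectors inducing the same twelve observable probabilities (P_{1211}, P_{1111}, P_{1011}, P_{0211}, P_{0111}, P_{0011}, P_{1+10}, P_{0+10}, P_{+201}, P_{+101}, P_{+001}, P_{++00}) = (180,60,15,120,30,15,285,195,180,50,20,290)/1440, both having P(M=1)=1/2, P(R^M=1|M=1)=3/4, P(R^M=1|M=0)=1/2, but differing in the conditional outcome distributions: the first has P(Y=2|M=1)=1/2 and the second P(Y=2|M=1)=5/8, hence different joint laws of (M,Y). -/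

import Mathlib

/-!
Cells with `R^Y = 1` see `Y` only through the products `P(Y=y|M=m) P(R^Y=1|Y=y)`, and since
`P(R^Y=0|Y=y) = 1 - P(R^Y=1|Y=y)` the cells with `R^Y = 0` are then fixed by normalisation.
Multiplying `P(Y=y|M=m)` by a factor `c_y` and dividing `P(R^Y=1|Y=y)` by it thus leaves the
observed law unchanged, as long as `∑_y P(Y=y|M=m) c_y = 1` for every `m`. These two affine
conditions on `c ∈ ℝ³` leave a line of solutions through `c = (1, 1, 1)`: because `Y` takes more
values than `M`, some `c ≠ (1, 1, 1)` close to it keeps every `P(R^Y=1|Y=y) / c_y` a probability.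
-/

open Finset

section ObservationalEquivalence

variable {α β : Type*}
  {pM : α → ℝ} {pRM : α → Bool → ℝ} {pY qY : α → β → ℝ} {pRY qRY : β → Bool → ℝ}

theorem cell_true_eq_of_mul_true_eq (h : ∀ m y, pY m y * pRY y true = qY m y * qRY y true)
    (m : α) (y : β) (r : Bool) :
    pM m * qY m y * pRM m r * qRY y true = pM m * pY m y * pRM m r * pRY y true := by
  linear_combination (pM m * pRM m r) * (h m y).symm

variable [Fintype β]

theorem sum_mul_false_eq_sub {f : β → ℝ} {g : β → Bool → ℝ} (hg : ∀ y, ∑ s, g y s = 1) :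
    ∑ y, f y * g y false = ∑ y, f y - ∑ y, f y * g y true := by
  rw [← sum_sub_distrib]
  refine sum_congr rfl fun y _ => ?_
  have hy : g y true + g y false = 1 := by rw [← Fintype.sum_bool, hg]
  linear_combination f y * hy

theorem sum_mul_false_eq_of_mul_true_eq (hpY : ∀ m, ∑ y, pY m y = 1) (hqY : ∀ m, ∑ y, qY m y = 1)
    (hpRY : ∀ y, ∑ s, pRY y s = 1) (hqRY : ∀ y, ∑ s, qRY y s = 1)
    (h : ∀ m y, pY m y * pRY y true = qY m y * qRY y true) (m : α) :
    ∑ y, qY m y * qRY y false = ∑ y, pY m y * pRY y false := by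
  rw [sum_mul_false_eq_sub hpRY, sum_mul_false_eq_sub hqRY, hpY, hqY]
  simp only [h]

theorem sum_cell_false_eq_of_mul_true_eq
    (hpY : ∀ m, ∑ y, pY m y = 1) (hqY : ∀ m, ∑ y, qY m y = 1)
    (hpRY : ∀ y, ∑ s, pRY y s = 1) (hqRY : ∀ y, ∑ s, qRY y s = 1)
    (h : ∀ m y, pY m y * pRY y true = qY m y * qRY y true) (m : α) (r : Bool) :
    ∑ y, pM m * qY m y * pRM m r * qRY y false =
      ∑ y, pM m * pY m y * pRM m r * pRY y false := by
  have factor (f : β → ℝ) (g : β → Bool → ℝ) :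
      ∑ y, pM m * f y * pRM m r * g y false = pM m * pRM m r * ∑ y, f y * g y false := by
    rw [mul_sum]
    exact sum_congr rfl fun y _ => by ring
  rw [factor, factor, sum_mul_false_eq_of_mul_true_eq hpY hqY hpRY hqRY h]

end ObservationalEquivalence

def bernoulliWeights (p : ℝ) : Bool → ℝ := fun s => if s then p else 1 - p

theorem bernoulliWeights_mem_stdSimplex {p : ℝ} (h₀ : 0 ≤ p) (h₁ : p ≤ 1) :
    bernoulliWeights p ∈ stdSimplex ℝ Bool := by
  refine ⟨fun s => ?_, ?_⟩
  · cases s <;> simp [bernoulliWeights, h₀, h₁]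
  · simp [bernoulliWeights]

theorem vec3_mem_stdSimplex {a b c : ℝ} (ha : 0 ≤ a) (hb : 0 ≤ b) (hc : 0 ≤ c)
    (h : a + b + c = 1) : ![a, b, c] ∈ stdSimplex ℝ (Fin 3) := by
  refine ⟨fun i => ?_, ?_⟩
  · fin_cases i <;> assumption
  · simpa [Fin.sum_univ_three] using h

namespace TernaryOutcomeWitness

noncomputable section

def pM : Bool → ℝ := fun _ => 1 / 2

def pRM : Bool → Bool → ℝ := fun m => bernoulliWeights (if m then 3 / 4 else 1 / 2)

def pY₁ : Bool → Fin 3 → ℝ := fun m => if m then ![1 / 6, 1 / 3, 1 / 2] else ![1 / 4, 1 / 4, 1 / 2]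

def pRY₁ : Fin 3 → Bool → ℝ := fun y => bernoulliWeights (![1 / 6, 1 / 3, 2 / 3] y)

/-- `pY₂ m y = pY₁ m y * c y` and `pRY₂ y true = pRY₁ y true / c y` with `c = (3/4, 3/4, 5/4)`. -/
def pY₂ : Bool → Fin 3 → ℝ := fun m => if m then ![1 / 8, 1 / 4, 5 / 8] else ![3 / 16, 3 / 16, 5 / 8]

def pRY₂ : Fin 3 → Bool → ℝ := fun y => bernoulliWeights (![2 / 9, 4 / 9, 8 / 15] y)

theorem pM_mem_stdSimplex : pM ∈ stdSimplex ℝ Bool :=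
  ⟨fun _ => by norm_num [pM], by norm_num [pM]⟩

theorem pRM_mem_stdSimplex (m : Bool) : pRM m ∈ stdSimplex ℝ Bool := by
  cases m <;> apply bernoulliWeights_mem_stdSimplex <;> norm_num

theorem pY₁_mem_stdSimplex (m : Bool) : pY₁ m ∈ stdSimplex ℝ (Fin 3) := by
  cases m <;> apply vec3_mem_stdSimplex <;> norm_num

theorem pY₂_mem_stdSimplex (m : Bool) : pY₂ m ∈ stdSimplex ℝ (Fin 3) := by
  cases m <;> apply vec3_mem_stdSimplex <;> norm_num

theorem pRY₁_mem_stdSimplex (y : Fin 3) : pRY₁ y ∈ stdSimplex ℝ Bool := by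
  fin_cases y <;> apply bernoulliWeights_mem_stdSimplex <;> norm_num

theorem pRY₂_mem_stdSimplex (y : Fin 3) : pRY₂ y ∈ stdSimplex ℝ Bool := by
  fin_cases y <;> apply bernoulliWeights_mem_stdSimplex <;> norm_num

theorem pY₁_mul_pRY₁_eq_pY₂_mul_pRY₂ (m : Bool) (y : Fin 3) :
    pY₁ m y * pRY₁ y true = pY₂ m y * pRY₂ y true := by
  cases m <;> fin_cases y <;> norm_num [pY₁, pY₂, pRY₁, pRY₂, bernoulliWeights]

end

end TernaryOutcomeWitness

open TernaryOutcomeWitness in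
/-- Counterexample (vi): binary mediator `M`, ternary outcome `Y ∈ {0,1,2}`,
joint law factoring as `P(M) P(Y|M) P(R^M|M) P(R^Y|Y)`.  Two distinct
parameter vectors induce the same twelve observable probabilities
`(180, 60, 15, 120, 30, 15, 285, 195, 180, 50, 20, 290)/1440`, both with
`P(M=1)=1/2`, `P(R^M=1|M=1)=3/4`, `P(R^M=1|M=0)=1/2`, but differing in the
conditional outcome distribution (`P(Y=2|M=1) = 1/2` versus `5/8`), hence in
the joint law of `(M, Y)`. -/
theorem unidentifiable_ternary_outcome :
    ∃ (pM qM : Bool → ℝ) (pY qY : Bool → Fin 3 → ℝ) (pRM qRM : Bool → Bool → ℝ)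
      (pRY qRY : Fin 3 → Bool → ℝ),
      -- pmf / conditional-pmf conditions
      (∀ m, 0 ≤ pM m) ∧ (∑ m, pM m) = 1 ∧ (∀ m, 0 ≤ qM m) ∧ (∑ m, qM m) = 1 ∧
      (∀ m y, 0 ≤ pY m y) ∧ (∀ m, (∑ y, pY m y) = 1) ∧
      (∀ m y, 0 ≤ qY m y) ∧ (∀ m, (∑ y, qY m y) = 1) ∧
      (∀ m r, 0 ≤ pRM m r) ∧ (∀ m, (∑ r, pRM m r) = 1) ∧
      (∀ m r, 0 ≤ qRM m r) ∧ (∀ m, (∑ r, qRM m r) = 1) ∧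
      (∀ y s, 0 ≤ pRY y s) ∧ (∀ y, (∑ s, pRY y s) = 1) ∧
      (∀ y s, 0 ≤ qRY y s) ∧ (∀ y, (∑ s, qRY y s) = 1) ∧
      -- observables of the first witness
      (pM true * pY true 2 * pRM true true * pRY 2 true = 180/1440 ∧
        pM true * pY true 1 * pRM true true * pRY 1 true = 60/1440 ∧
        pM true * pY true 0 * pRM true true * pRY 0 true = 15/1440 ∧
        pM false * pY false 2 * pRM false true * pRY 2 true = 120/1440 ∧
        pM false * pY false 1 * pRM false true * pRY 1 true = 30/1440 ∧
        pM false * pY false 0 * pRM false true * pRY 0 true = 15/1440 ∧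
        (∑ y, pM true * pY true y * pRM true true * pRY y false) = 285/1440 ∧
        (∑ y, pM false * pY false y * pRM false true * pRY y false) = 195/1440 ∧
        (∑ m, pM m * pY m 2 * pRM m false * pRY 2 true) = 180/1440 ∧
        (∑ m, pM m * pY m 1 * pRM m false * pRY 1 true) = 50/1440 ∧
        (∑ m, pM m * pY m 0 * pRM m false * pRY 0 true) = 20/1440 ∧
        (∑ m, ∑ y, pM m * pY m y * pRM m false * pRY y false) = 290/1440) ∧
      -- the same observables for the second witness
      (qM true * qY true 2 * qRM true true * qRY 2 true = 180/1440 ∧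
        qM true * qY true 1 * qRM true true * qRY 1 true = 60/1440 ∧
        qM true * qY true 0 * qRM true true * qRY 0 true = 15/1440 ∧
        qM false * qY false 2 * qRM false true * qRY 2 true = 120/1440 ∧
        qM false * qY false 1 * qRM false true * qRY 1 true = 30/1440 ∧
        qM false * qY false 0 * qRM false true * qRY 0 true = 15/1440 ∧
        (∑ y, qM true * qY true y * qRM true true * qRY y false) = 285/1440 ∧
        (∑ y, qM false * qY false y * qRM false true * qRY y false) = 195/1440 ∧
        (∑ m, qM m * qY m 2 * qRM m false * qRY 2 true) = 180/1440 ∧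
        (∑ m, qM m * qY m 1 * qRM m false * qRY 1 true) = 50/1440 ∧
        (∑ m, qM m * qY m 0 * qRM m false * qRY 0 true) = 20/1440 ∧
        (∑ m, ∑ y, qM m * qY m y * qRM m false * qRY y false) = 290/1440) ∧
      -- both have the same identified parameters
      pM true = 1/2 ∧ qM true = 1/2 ∧
      pRM true true = 3/4 ∧ pRM false true = 1/2 ∧
      qRM true true = 3/4 ∧ qRM false true = 1/2 ∧
      -- but differ in the conditional outcome distribution
      pY true 2 = 1/2 ∧ qY true 2 = 5/8 ∧
      -- hence in the joint law of (M, Y)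
      pM true * pY true 2 ≠ qM true * qY true 2 := by
  refine ⟨pM, pM, pY₁, pY₂, pRM, pRM, pRY₁, pRY₂, ?_⟩
  have hprod := pY₁_mul_pRY₁_eq_pY₂_mul_pRY₂
  -- the second witness's cells become those of the first
  simp only [cell_true_eq_of_mul_true_eq hprod,
    sum_cell_false_eq_of_mul_true_eq (fun m => (pY₁_mem_stdSimplex m).2)
      (fun m => (pY₂_mem_stdSimplex m).2) (fun y => (pRY₁_mem_stdSimplex y).2)
      (fun y => (pRY₂_mem_stdSimplex y).2) hprod]
  refine ⟨pM_mem_stdSimplex.1, pM_mem_stdSimplex.2, pM_mem_stdSimplex.1, pM_mem_stdSimplex.2,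
    fun m => (pY₁_mem_stdSimplex m).1, fun m => (pY₁_mem_stdSimplex m).2,
    fun m => (pY₂_mem_stdSimplex m).1, fun m => (pY₂_mem_stdSimplex m).2,
    fun m => (pRM_mem_stdSimplex m).1, fun m => (pRM_mem_stdSimplex m).2,
    fun m => (pRM_mem_stdSimplex m).1, fun m => (pRM_mem_stdSimplex m).2,
    fun y => (pRY₁_mem_stdSimplex y).1, fun y => (pRY₁_mem_stdSimplex y).2,
    fun y => (pRY₂_mem_stdSimplex y).1, fun y => (pRY₂_mem_stdSimplex y).2,
    ?_, ?_, ?_⟩ <;>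
  norm_num [pM, pRM, pY₁, pY₂, pRY₁, bernoulliWeights, Fin.sum_univ_three, Matrix.cons_val_two]
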